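/- arXiv:2008.07233 — 3 statements merged into one kernel-verified Lean document; each statement's English description precedes it below -/
import Mathlib

section
/- Let Σ be a finite alphabet and let I ⊆ I' be two irreflexive symmetric relations on Σ. Let M = M(Σ,I) and N = M(Σ,I') be the corresponding trace monoids and π : M → N the canonical surjective monoid homomorphism (identity on letters). Then for every ω ∈ M, the restriction of π to the set {x ∈ M | x ≤ ω} of left divisors of ω is injective. -/
open scoped Classical

section TracePre

variable {A : Type*}

/-- The elementary swap relation from an independence relation. -/
def swapRel (I : A → A → Prop) : FreeMonoid A → FreeMonoid A → Prop :=
  fun x y => ∃ a b, I a b ∧ x = FreeMonoid.of a * FreeMonoid.of b ∧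
    y = FreeMonoid.of b * FreeMonoid.of a

/-- The congruence generated by the commutations. -/
def traceCon (I : A → A → Prop) : Con (FreeMonoid A) := conGen (swapRel I)

/-- The trace monoid `M(A, I)`. -/
abbrev TraceMonoid (A : Type*) (I : A → A → Prop) := (traceCon I).Quotient

/-- Image of a letter in the trace monoid. -/
def trOf (I : A → A → Prop) (a : A) : TraceMonoid A I := (traceCon I).mk' (FreeMonoid.of a)

theorem traceCon_le_ker {M : Type*} [CommMonoid M] {I : A → A → Prop}
    (φ : FreeMonoid A →* M) : traceCon I ≤ Con.ker φ := by
  apply Con.conGen_le.mpr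
  rintro x y ⟨a, b, _, rfl, rfl⟩
  simp [Con.ker_rel, map_mul, mul_comm]

/-- Length of a trace. -/
noncomputable def trLen {I : A → A → Prop} (x : TraceMonoid A I) : ℕ :=
  Multiplicative.toAdd
    ((Con.lift (traceCon I) (FreeMonoid.lift fun _ => Multiplicative.ofAdd (1 : ℕ))
      (traceCon_le_ker _)) x)

/-- Number of occurrences of the letter `a` in a trace. -/
noncomputable def trCount {I : A → A → Prop} (a : A) (x : TraceMonoid A I) : ℕ :=
  Multiplicative.toAdd
    ((Con.lift (traceCon I)
      (FreeMonoid.lift fun b => Multiplicative.ofAdd (if b = a then (1 : ℕ) else 0))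
      (traceCon_le_ker _)) x)

/-- Lists of pairwise distinct, pairwise independent letters. -/
def IsCliqueList (I : A → A → Prop) (l : List A) : Prop :=
  l.Pairwise fun a b => a ≠ b ∧ I a b

/-- The trace associated with a list of letters. -/
def listProd (I : A → A → Prop) (l : List A) : TraceMonoid A I := (l.map (trOf I)).prod

/-- A clique of the trace monoid. -/
def IsClique (I : A → A → Prop) (x : TraceMonoid A I) : Prop :=
  ∃ l, IsCliqueList I l ∧ x = listProd I l

/-- The trace associated with a finite set of letters. -/
noncomputable def fprod (I : A → A → Prop) (c : Finset A) : TraceMonoid A I :=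
  listProd I c.toList

/-- Normal pairs of cliques, cliques being represented by finite sets of letters. -/
def NormalF (I : A → A → Prop) (c d : Finset A) : Prop :=
  ∀ b ∈ d, ∃ a ∈ c, (¬ I a b ∨ a = b)

/-- Greatest lower bound for left divisibility. -/
def IsGlbDvd {M : Type*} [Monoid M] (x y g : M) : Prop :=
  g ∣ x ∧ g ∣ y ∧ ∀ w, w ∣ x → w ∣ y → w ∣ g

/-- Least upper bound for left divisibility. -/
def IsLubDvd {M : Type*} [Monoid M] (x y z : M) : Prop :=
  x ∣ z ∧ y ∣ z ∧ ∀ w, x ∣ w → y ∣ w → z ∣ w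

end TracePre

section CSPre

variable {A X : Type*}

/-- A concurrent system: a right action of a trace monoid on `X ∪ {⊥}`,
`⊥` being encoded by `none`. -/
structure CS (A : Type*) (I : A → A → Prop) (X : Type*) where
  act : Option X → TraceMonoid A I → Option X
  act_one : ∀ s, act s 1 = s
  act_mul : ∀ s x y, act s (x * y) = act (act s x) y
  act_bot : ∀ x, act none x = none

variable {I : A → A → Prop}

/-- The letter `a` is enabled at state `α`. -/
def CS.Enabled (S : CS A I X) (α : X) (a : A) : Prop := S.act (some α) (trOf I a) ≠ none

/-- The set of executions starting from `α`. -/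
def CS.MSet (S : CS A I X) (α : X) : Set (TraceMonoid A I) :=
  {x | S.act (some α) x ≠ none}

/-- A deterministic concurrent system: any two letters enabled at a common state
commute. -/
def CS.Deterministic (S : CS A I X) : Prop :=
  ∀ (α : X) (a b : A), a ≠ b → S.Enabled α a → S.Enabled α b → I a b

/-- The finite set of letters enabled at an extended state. -/
noncomputable def CS.enabledFinset [Fintype A] (S : CS A I X) (s : Option X) : Finset A :=
  Finset.univ.filter fun a => S.act s (trOf I a) ≠ none

/-- A generalised execution from `α`, as an infinite normal sequence of cliques
all of whose finite prefixes are executions. -/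
def CS.IsGenExec (S : CS A I X) (α : X) (c : ℕ → Finset A) : Prop :=
  (∀ i, (↑(c i) : Set A).Pairwise I) ∧ (∀ i, NormalF I (c i) (c (i + 1))) ∧
    ∀ k, S.act (some α) (((List.range k).map fun i => fprod I (c i)).prod) ≠ none

/-- An infinite execution from `α`: a generalised execution with all cliques nonempty. -/
def CS.IsInfExec (S : CS A I X) (α : X) (c : ℕ → Finset A) : Prop :=
  S.IsGenExec α c ∧ ∀ i, c i ≠ ∅

end CSPre

/-- The canonical projection between trace monoids induced by enlarging the
independence relation (identity on letters). -/
def traceMap {A : Type*} {I I' : A → A → Prop} (hsub : ∀ a b, I a b → I' a b) :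
    TraceMonoid A I →* TraceMonoid A I' :=
  Con.lift _ (traceCon I').mk' (by
    rw [Con.mk'_ker]
    apply Con.conGen_le.mpr
    rintro x y ⟨a, b, hab, rfl, rfl⟩
    exact ConGen.Rel.of _ _ ⟨a, b, hsub a b hab, rfl, rfl⟩)

/-!
The projection `π` preserves the number of occurrences of each letter, so it suffices to show
that two left divisors `x`, `y` of `ω` with the same letter counts coincide. Induct on
`x = a x'`: the letter `a` occurs in `y = b₁ ⋯ bₖ a ⋯` (first occurrence); each `bᵢ` and `a`
both left-divide a common trace, and two distinct letters with that property are independent,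
so `a` commutes to the front of `y` and can be cancelled.

Both facts about letters come from the residual `res a x`, which extracts the first `a` from a
word when every letter before it is independent of `a`. It is invariant under commutations,
hence defined on traces, and satisfies `res a (a x) = x`, while for `b ≠ a` the value
`res a (b x)` is `b · res a x` if `I a b` and undefined otherwise.
-/

namespace TraceMonoid

variable {A : Type*} {I : A → A → Prop}

def ofList (I : A → A → Prop) (w : List A) : TraceMonoid A I :=
  (traceCon I).mk' (FreeMonoid.ofList w)

@[simp]
lemma ofList_cons (c : A) (w : List A) : ofList I (c :: w) = trOf I c * ofList I w := rfl

lemma ofList_append (u v : List A) : ofList I (u ++ v) = ofList I u * ofList I v := by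
  simp only [ofList, FreeMonoid.ofList_append, map_mul]

lemma ofList_surjective : Function.Surjective (ofList I) := fun x => by
  obtain ⟨w, rfl⟩ := Con.mk'_surjective x
  exact ⟨w.toList, by simp [ofList]⟩

@[elab_as_elim]
theorem induction_on {P : TraceMonoid A I → Prop} (x : TraceMonoid A I) (one : P 1)
    (trOf_mul : ∀ a x, P x → P (trOf I a * x)) : P x := by
  obtain ⟨w, rfl⟩ := ofList_surjective x
  induction w with
  | nil => exact one
  | cons c w ih => exact trOf_mul c _ ih

lemma trOf_mul_comm {a b : A} (h : I a b) : trOf I a * trOf I b = trOf I b * trOf I a :=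
  (traceCon I).eq.mpr (ConGen.Rel.of _ _ ⟨a, b, h, rfl, rfl⟩)

@[simp]
lemma trCount_one (a : A) : trCount a (1 : TraceMonoid A I) = 0 := by
  simp [trCount]

@[simp]
lemma trCount_mul (a : A) (x y : TraceMonoid A I) :
    trCount a (x * y) = trCount a x + trCount a y := by
  simp [trCount]

@[simp]
lemma trCount_trOf (a b : A) : trCount a (trOf I b) = if b = a then 1 else 0 := by
  simp [trCount, trOf]

lemma eq_one_of_trCount_eq_zero {x : TraceMonoid A I} (h : ∀ a, trCount a x = 0) : x = 1 := by
  induction x using induction_on with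
  | one => rfl
  | trOf_mul b x _ => simpa using h b

lemma traceMap_trOf {I' : A → A → Prop} (hsub : ∀ a b, I a b → I' a b) (a : A) :
    traceMap hsub (trOf I a) = trOf I' a :=
  Con.lift_mk' _ _

lemma trCount_traceMap {I' : A → A → Prop} (hsub : ∀ a b, I a b → I' a b) (a : A)
    (x : TraceMonoid A I) : trCount a (traceMap hsub x) = trCount a x := by
  induction x using induction_on with
  | one => simp
  | trOf_mul b x ih => simp [traceMap_trOf, ih]

noncomputable def resWord (I : A → A → Prop) (a : A) : List A → Option (TraceMonoid A I)
  | [] => none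
  | c :: w => if c = a then some (ofList I w) else
      if I a c then (resWord I a w).map (trOf I c * ·) else none

lemma resWord_swap (hI : Symmetric I) {c d : A} (h : I c d) (a : A) (z : List A) :
    resWord I a (c :: d :: z) = resWord I a (d :: c :: z) := by
  by_cases hca : c = a
  · subst hca
    by_cases hdc : d = c
    · rw [hdc]
    · simp [resWord, hdc, h]
  by_cases hda : d = a
  · subst hda
    simp [resWord, hca, hI h]
  simp only [resWord, hca, hda, if_false]
  by_cases hac : I a c <;> by_cases had : I a d <;>
    simp [hac, had, Option.map_map, Function.comp_def, ← mul_assoc, trOf_mul_comm h]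

lemma resWord_append_congr {a : A} {u v : List A} (huv : ofList I u = ofList I v)
    (h : ∀ z, resWord I a (u ++ z) = resWord I a (v ++ z)) (w z : List A) :
    resWord I a (w ++ (u ++ z)) = resWord I a (w ++ (v ++ z)) := by
  induction w with
  | nil => exact h z
  | cons c w ih => simp only [List.cons_append, resWord, ih, ofList_append, huv]

/-- Quantifying over right extensions makes this relation compatible with right multiplication
for free; compatibility on the left is `resWord_append_congr`. -/
def resCon (I : A → A → Prop) (a : A) : Con (FreeMonoid A) where
  r x y := traceCon I x y ∧ ∀ z, resWord I a (x.toList ++ z) = resWord I a (y.toList ++ z)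
  iseqv :=
    { refl := fun _ => ⟨(traceCon I).refl _, fun _ => rfl⟩
      symm := fun h => ⟨(traceCon I).symm h.1, fun z => (h.2 z).symm⟩
      trans := fun h₁ h₂ => ⟨(traceCon I).trans h₁.1 h₂.1, fun z => (h₁.2 z).trans (h₂.2 z)⟩ }
  mul' := by
    rintro x y x' y' ⟨hxy, hres⟩ ⟨hxy', hres'⟩
    refine ⟨(traceCon I).mul hxy hxy', fun z => ?_⟩
    have hx' : ofList I x'.toList = ofList I y'.toList := by
      simpa [ofList] using (traceCon I).eq.mpr hxy'
    simp only [FreeMonoid.toList_mul, List.append_assoc]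
    rw [resWord_append_congr hx' hres']
    exact hres _

lemma traceCon_le_resCon (hI : Symmetric I) (a : A) : traceCon I ≤ resCon I a := by
  apply Con.conGen_le.mpr
  rintro x y ⟨c, d, h, rfl, rfl⟩
  exact ⟨ConGen.Rel.of _ _ ⟨c, d, h, rfl, rfl⟩, resWord_swap hI h a⟩

noncomputable def residual (hI : Symmetric I) (a : A) (x : TraceMonoid A I) :
    Option (TraceMonoid A I) :=
  Con.liftOn x (fun w => resWord I a w.toList) fun u v h => by
    simpa using (traceCon_le_resCon hI a h).2 []

lemma residual_ofList (hI : Symmetric I) (a : A) (w : List A) :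
    residual hI a (ofList I w) = resWord I a w :=
  rfl

lemma residual_one (hI : Symmetric I) (a : A) : residual hI a 1 = none :=
  rfl

lemma residual_trOf_mul_self (hI : Symmetric I) (a : A) (x : TraceMonoid A I) :
    residual hI a (trOf I a * x) = some x := by
  obtain ⟨w, rfl⟩ := ofList_surjective x
  rw [← ofList_cons, residual_ofList]
  simp [resWord]

lemma residual_trOf_mul_of_ne (hI : Symmetric I) {a b : A} (hba : b ≠ a) (x : TraceMonoid A I) :
    residual hI a (trOf I b * x) =
      if I a b then (residual hI a x).map (trOf I b * ·) else none := by
  obtain ⟨w, rfl⟩ := ofList_surjective x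
  rw [← ofList_cons, residual_ofList, residual_ofList]
  simp [resWord, hba]

lemma eq_trOf_mul_of_residual_eq_some (hI : Symmetric I) {a : A} {x r : TraceMonoid A I}
    (h : residual hI a x = some r) : x = trOf I a * r := by
  induction x using induction_on generalizing r with
  | one => simp [residual_one] at h
  | trOf_mul b x ih =>
    by_cases hba : b = a
    · subst hba
      rw [residual_trOf_mul_self, Option.some_inj] at h
      rw [h]
    rw [residual_trOf_mul_of_ne hI hba] at h
    split_ifs at h with hab
    obtain ⟨s, hs, rfl⟩ := Option.map_eq_some_iff.mp h
    rw [ih hs, ← mul_assoc, ← mul_assoc, trOf_mul_comm hab]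

lemma trOf_mul_left_cancel (hI : Symmetric I) {a : A} {x y : TraceMonoid A I}
    (h : trOf I a * x = trOf I a * y) : x = y := by
  simpa [residual_trOf_mul_self hI] using congrArg (residual hI a) h

lemma indep_and_dvd_of_trOf_dvd_trOf_mul (hI : Symmetric I) {a b : A} (hab : a ≠ b)
    {x : TraceMonoid A I} (h : trOf I a ∣ trOf I b * x) : I a b ∧ trOf I a ∣ x := by
  obtain ⟨r, hr⟩ := h
  have hres := congrArg (residual hI a) hr
  rw [residual_trOf_mul_of_ne hI hab.symm, residual_trOf_mul_self] at hres
  split_ifs at hres with hIab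
  obtain ⟨s, hs, -⟩ := Option.map_eq_some_iff.mp hres
  exact ⟨hIab, s, eq_trOf_mul_of_residual_eq_some hI hs⟩

lemma trOf_dvd_of_dvd_of_trCount_pos (hI : Symmetric I) {c : A} {y ω : TraceMonoid A I}
    (hc : trOf I c ∣ ω) (hy : y ∣ ω) (hcy : 0 < trCount c y) : trOf I c ∣ y := by
  induction y using induction_on generalizing ω with
  | one => simp at hcy
  | trOf_mul d y ih =>
    by_cases hdc : d = c
    · rw [hdc]
      exact dvd_mul_right _ _
    obtain ⟨t, rfl⟩ := hy
    rw [mul_assoc] at hc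
    obtain ⟨hcd, hc'⟩ := indep_and_dvd_of_trOf_dvd_trOf_mul hI (Ne.symm hdc) hc
    obtain ⟨s, rfl⟩ := ih hc' (dvd_mul_right y t) (by simpa [hdc] using hcy)
    exact ⟨trOf I d * s, by rw [← mul_assoc, ← mul_assoc, trOf_mul_comm hcd]⟩

theorem eq_of_dvd_of_trCount_eq (hI : Symmetric I) {x y ω : TraceMonoid A I} (hx : x ∣ ω)
    (hy : y ∣ ω) (hxy : ∀ a, trCount a x = trCount a y) : x = y := by
  induction x using induction_on generalizing y ω with
  | one => exact (eq_one_of_trCount_eq_zero fun a => by simp [← hxy a]).symm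
  | trOf_mul c x ih =>
    obtain ⟨t, rfl⟩ := hx
    have hcy : trOf I c ∣ y :=
      trOf_dvd_of_dvd_of_trCount_pos hI (dvd_mul_of_dvd_left (dvd_mul_right _ _) t) hy
        (by simp [← hxy c])
    obtain ⟨y, rfl⟩ := hcy
    obtain ⟨s, hs⟩ := hy
    simp only [mul_assoc] at hs
    have hy' : y ∣ x * t := ⟨s, trOf_mul_left_cancel hI hs⟩
    rw [ih (dvd_mul_right x t) hy' fun a => by simpa using hxy a]

end TraceMonoid

theorem stmt0_general {A : Type*} {I I' : A → A → Prop}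
    (hIsym : Symmetric I)
    (hsub : ∀ a b, I a b → I' a b)
    (ω : TraceMonoid A I) :
    Set.InjOn (traceMap hsub) {x : TraceMonoid A I | x ∣ ω} := by
  intro x hx y hy hxy
  refine TraceMonoid.eq_of_dvd_of_trCount_eq hIsym hx hy fun a => ?_
  rw [← TraceMonoid.trCount_traceMap hsub, hxy, TraceMonoid.trCount_traceMap]

/-- for `I ⊆ I'`, the canonical surjection `π : M(Σ,I) → M(Σ,I')` is
injective on the set of left divisors of any `ω ∈ M(Σ,I)`. -/
theorem stmt0 {A : Type*} [Fintype A] {I I' : A → A → Prop}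
    (hIsym : Symmetric I) (hIirr : Irreflexive I)
    (hI'sym : Symmetric I') (hI'irr : Irreflexive I')
    (hsub : ∀ a b, I a b → I' a b)
    (hsurj : Function.Surjective (traceMap hsub))
    (ω : TraceMonoid A I) :
    Set.InjOn (traceMap hsub) {x : TraceMonoid A I | x ∣ ω} :=
  stmt0_general hIsym hsub ω
end

section
/- Let M = M(Σ,I) be a trace monoid on a finite alphabet Σ with |Σ| = N ≥ 1, and let ω ∈ M. Then the number of left divisors of ω of length n is at most the number of multisets of size n over Σ, i.e., #{x ∈ M | x ≤ ω ∧ |x| = n} ≤ C(n+N−1, N−1). In particular this bound is polynomial in n and does not depend on ω. -/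
open scoped Classical

/-!
A trace is determined by its projections onto the sets of pairwise dependent letters (the
projection lemma). A left divisor `x` of `ω` projects onto a prefix of the projection of `ω`,
and the length of that prefix is read off the letter counts of `x`. Hence the Parikh map
(letter counts, as a multiset) is injective on the left divisors of `ω`, and sends those of
length `n` into the multisets of size `n` over `Σ`, of which there are `C(n + N - 1, N - 1)`.
-/

namespace TraceMonoid

variable {A : Type*} {I : A → A → Prop}

theorem traceCon_le_ker_of_commute {M : Type*} [Monoid M] (φ : FreeMonoid A →* M)
    (hφ : ∀ a b, I a b → Commute (φ (.of a)) (φ (.of b))) : traceCon I ≤ Con.ker φ := by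
  refine Con.conGen_le.mpr ?_
  rintro x y ⟨a, b, hab, rfl, rfl⟩
  simpa [Con.ker_rel] using (hφ a b hab).eq

theorem listProd_eq_mk' (l : List A) :
    listProd I l = (traceCon I).mk' (FreeMonoid.ofList l) := by
  induction l with
  | nil => rfl
  | cons a l ih =>
    simp only [listProd, List.map_cons, List.prod_cons] at ih ⊢
    rw [ih]
    rfl

theorem listProd_append (u v : List A) : listProd I (u ++ v) = listProd I u * listProd I v := by
  simp [listProd]

theorem listProd_cons (a : A) (l : List A) : listProd I (a :: l) = trOf I a * listProd I l := by
  simp [listProd]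

theorem exists_listProd_eq (x : TraceMonoid A I) : ∃ l, listProd I l = x := by
  obtain ⟨w, rfl⟩ := Con.mk'_surjective x
  exact ⟨w.toList, listProd_eq_mk' _⟩

theorem trLen_listProd (l : List A) : trLen (listProd I l) = l.length := by
  simp [trLen, listProd_eq_mk', FreeMonoid.lift_ofList]

theorem commute_trOf {a b : A} (h : I a b) : Commute (trOf I a) (trOf I b) :=
  (Con.eq _).mpr (ConGen.Rel.of _ _ ⟨a, b, h, rfl, rfl⟩)

theorem map_ofList_eq_of_listProd_eq {M : Type*} [Monoid M] (φ : FreeMonoid A →* M)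
    (hφ : ∀ a b, I a b → Commute (φ (.of a)) (φ (.of b))) {u v : List A}
    (h : listProd I u = listProd I v) : φ (.ofList u) = φ (.ofList v) := by
  rw [listProd_eq_mk', listProd_eq_mk'] at h
  exact traceCon_le_ker_of_commute φ hφ ((Con.eq _).mp h)

theorem listProd_append_cons {a : A} {p q : List A}
    (hp : ∀ b ∈ p, Commute (trOf I a) (trOf I b)) :
    listProd I (p ++ a :: q) = listProd I (a :: (p ++ q)) := by
  have ha : Commute (trOf I a) (listProd I p) :=
    Commute.list_prod_right _ _ (by simpa using hp)
  rw [listProd_append, listProd_cons, listProd_cons, listProd_append, ← mul_assoc,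
    ← ha.eq, mul_assoc]

theorem filter_eq_of_listProd_eq {s : Set A} (hs : s.Pairwise fun a b => ¬ I a b)
    {u v : List A} (h : listProd I u = listProd I v) : u.filter (· ∈ s) = v.filter (· ∈ s) := by
  let φ : FreeMonoid A →* FreeMonoid A := FreeMonoid.lift fun a => if a ∈ s then .of a else 1
  have hφ (l : List A) : φ (.ofList l) = .ofList (l.filter (· ∈ s)) := by
    induction l with
    | nil => rfl
    | cons a l ih =>
      by_cases ha : a ∈ s <;> simp_all [φ, FreeMonoid.ofList_cons]
  have hcomm (a b : A) (hab : I a b) : Commute (φ (.of a)) (φ (.of b)) := by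
    by_cases ha : a ∈ s
    · by_cases hb : b ∈ s
      · rw [hs.eq ha hb (not_not.mpr hab)]
      · simp [φ, hb]
    · simp [φ, ha]
  simpa [hφ] using map_ofList_eq_of_listProd_eq φ hcomm h

/-- If a letter `b` before the first `a` in `v` did not commute with `a`, the projections of
`a :: u` and `v` onto `{a, b}` would start with different letters. -/
theorem exists_eq_append_cons_of_filter_eq {a : A} {u v : List A}
    (h : ∀ s : Set A, s.Pairwise (fun a b => ¬ I a b) →
      (a :: u).filter (· ∈ s) = v.filter (· ∈ s)) :
    ∃ p q, v = p ++ a :: q ∧ ∀ b ∈ p, I a b ∨ I b a := by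
  have h1 := h {a} (Set.pairwise_singleton _ _)
  simp only [Set.mem_singleton_iff, decide_true, List.filter_cons_of_pos] at h1
  obtain ⟨p, q, rfl, hap⟩ := List.eq_append_cons_of_mem
    (List.mem_of_mem_filter (h1 ▸ List.mem_cons_self : a ∈ v.filter _))
  refine ⟨p, q, rfl, fun b hb => ?_⟩
  by_contra hab
  have h2 := h {a, b} (Set.pairwise_pair.mpr fun _ => not_or.mp hab)
  simp only [Set.mem_insert_iff, Set.mem_singleton_iff, Bool.decide_or, decide_true, Bool.true_or,
    List.filter_cons_of_pos, List.filter_append] at h2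
  rcases List.cons_eq_append_iff.mp h2 with ⟨hnil, -⟩ | ⟨p', hp', -⟩
  · exact absurd (List.filter_eq_nil_iff.mp hnil b hb) (by simp)
  · exact hap (List.mem_of_mem_filter (hp' ▸ List.mem_cons_self))

theorem listProd_eq_of_forall_filter_eq {u v : List A}
    (h : ∀ s : Set A, s.Pairwise (fun a b => ¬ I a b) → u.filter (· ∈ s) = v.filter (· ∈ s)) :
    listProd I u = listProd I v := by
  induction u generalizing v with
  | nil =>
    cases v with
    | nil => rfl
    | cons b v => simpa using h {b} (Set.pairwise_singleton _ _)
  | cons a u ih =>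
    obtain ⟨p, q, rfl, hp⟩ := exists_eq_append_cons_of_filter_eq h
    have hv : listProd I (p ++ a :: q) = listProd I (a :: (p ++ q)) :=
      listProd_append_cons fun b hb =>
        (hp b hb).elim commute_trOf fun h => (commute_trOf h).symm
    rw [hv, listProd_cons, listProd_cons, ih fun s hs => ?_]
    have hs' := h s hs
    rw [filter_eq_of_listProd_eq hs hv] at hs'
    by_cases ha : a ∈ s <;> simpa [List.filter_cons, ha] using hs'

noncomputable def parikh (x : TraceMonoid A I) : Multiset A :=
  Multiplicative.toAdd
    ((Con.lift (traceCon I) (FreeMonoid.lift fun a => Multiplicative.ofAdd {a})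
      (traceCon_le_ker _)) x)

theorem parikh_listProd (l : List A) : parikh (listProd I l) = l := by
  rw [parikh, listProd_eq_mk', Con.lift_mk', FreeMonoid.lift_ofList]
  induction l with
  | nil => rfl
  | cons a l ih => simp [ih]

theorem card_parikh (x : TraceMonoid A I) : Multiset.card (parikh x) = trLen x := by
  obtain ⟨l, rfl⟩ := exists_listProd_eq x
  rw [parikh_listProd, trLen_listProd, Multiset.coe_card]

theorem parikh_injOn_dvd (ω : TraceMonoid A I) : Set.InjOn parikh {x | x ∣ ω} := by
  rintro x ⟨z, hxz⟩ y ⟨z', hyz'⟩ hxy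
  obtain ⟨u, rfl⟩ := exists_listProd_eq x
  obtain ⟨v, rfl⟩ := exists_listProd_eq y
  obtain ⟨s, rfl⟩ := exists_listProd_eq z
  obtain ⟨t, rfl⟩ := exists_listProd_eq z'
  rw [parikh_listProd, parikh_listProd, Multiset.coe_eq_coe] at hxy
  have hω : listProd I (u ++ s) = listProd I (v ++ t) := by
    rw [listProd_append, listProd_append, ← hxz, ← hyz']
  refine listProd_eq_of_forall_filter_eq fun S hS => ?_
  have hfilter := filter_eq_of_listProd_eq hS hω
  rw [List.filter_append, List.filter_append] at hfilter
  exact (List.append_inj hfilter (hxy.filter _).length_eq).1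

end TraceMonoid

theorem Sym.card_le_choose (A : Type*) [Fintype A] (n : ℕ) :
    Fintype.card (Sym A n) ≤ (n + Fintype.card A - 1).choose (Fintype.card A - 1) := by
  rw [Sym.card_sym_eq_choose]
  rcases Nat.eq_zero_or_eq_succ_pred (Fintype.card A) with h | h
  · rcases n.eq_zero_or_pos with rfl | hn
    · simp [h]
    · simp [h, Nat.choose_eq_zero_of_lt (Nat.sub_one_lt_of_lt hn)]
  · rw [h]
    simp [Nat.add_comm n, Nat.choose_symm_add]

theorem stmt2_general {A : Type*} [Fintype A] {I : A → A → Prop}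
    (N : ℕ) (hN : N = Fintype.card A)
    (ω : TraceMonoid A I) (n : ℕ) :
    {x : TraceMonoid A I | x ∣ ω ∧ trLen x = n}.Finite ∧
      Nat.card {x : TraceMonoid A I // x ∣ ω ∧ trLen x = n} ≤ (n + N - 1).choose (N - 1) := by
  let f (x : {x : TraceMonoid A I // x ∣ ω ∧ trLen x = n}) : Sym A n :=
    ⟨TraceMonoid.parikh x.1, (TraceMonoid.card_parikh x.1).trans x.2.2⟩
  have hf : Function.Injective f := fun x y hxy =>
    Subtype.ext (TraceMonoid.parikh_injOn_dvd ω x.2.1 y.2.1 (congrArg Subtype.val hxy))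
  refine ⟨Set.finite_coe_iff.mp (Finite.of_injective f hf), ?_⟩
  calc Nat.card {x : TraceMonoid A I // x ∣ ω ∧ trLen x = n}
      ≤ Fintype.card (Sym A n) :=
        (Nat.card_le_card_of_injective f hf).trans_eq Nat.card_eq_fintype_card
    _ ≤ (n + N - 1).choose (N - 1) := hN ▸ Sym.card_le_choose A n

/-- the set of left divisors of `ω` of length `n` is finite of
cardinality at most `C(n + N - 1, N - 1)`, where `N = |Σ| ≥ 1`. -/
theorem stmt2 {A : Type*} [Fintype A] {I : A → A → Prop}
    (hsym : Symmetric I) (hirr : Irreflexive I)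
    (N : ℕ) (hN : N = Fintype.card A) (hN1 : 1 ≤ N)
    (ω : TraceMonoid A I) (n : ℕ) :
    {x : TraceMonoid A I | x ∣ ω ∧ trLen x = n}.Finite ∧
      Nat.card {x : TraceMonoid A I // x ∣ ω ∧ trLen x = n} ≤ (n + N - 1).choose (N - 1) :=
  stmt2_general N hN ω n
end

section
/- Let M = M(Σ,I) be a trace monoid on a finite alphabet. A pair of cliques (x,y) is normal, written x → y, if every letter b ∈ y depends on some letter a ∈ x (i.e., (a,b) ∉ I or a = b). Then for every nonempty trace x ∈ M there exists a unique k ≥ 1 and a unique sequence (c₁,…,c_k) of nonempty cliques with c_i → c_{i+1} for all 1 ≤ i < k and x = c₁·…·c_k (the Cartier–Foata normal form). -/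
open scoped Classical

/-- A normal pair of cliques: every letter of `d` depends on some letter of `c`. -/
def NormalPairM {A : Type*} (I : A → A → Prop) (c d : TraceMonoid A I) : Prop :=
  ∃ l₁ l₂ : List A, IsCliqueList I l₁ ∧ IsCliqueList I l₂ ∧
    c = listProd I l₁ ∧ d = listProd I l₂ ∧
    ∀ b ∈ l₂, ∃ a ∈ l₁, (¬ I a b ∨ a = b)

/-!
Read a word letter by letter while maintaining a list of cliques: a new letter joins the
earliest clique from which on it is independent of every letter already placed, and
otherwise opens a new last clique. This keeps the list a Cartier–Foata sequence whose product
is the word read so far, and two independent letters inserted in either order give the same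
list, so the result depends only on the trace; this gives existence. For uniqueness, reading
the letters of a Cartier–Foata sequence clique by clique rebuilds that very sequence: each
letter of a clique depends on a letter of the previous clique, so it cannot move further to
the left.
-/

lemma List.exists_map_eq_of_forall_mem {α β : Type*} {f : β → α} {p : β → Prop}
    {L : List α} (h : ∀ a ∈ L, ∃ b, p b ∧ f b = a) :
    ∃ F : List β, (∀ b ∈ F, p b) ∧ F.map f = L := by
  have : L ∈ Set.range (List.map fun b : Subtype p => f b) := by
    rw [Set.range_list_map]
    exact fun a ha => let ⟨b, hb, hba⟩ := h a ha; ⟨⟨b, hb⟩, hba⟩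
  obtain ⟨F, rfl⟩ := this
  exact ⟨F.map Subtype.val, by simp +contextual, by simp⟩

section CartierFoata

variable {A : Type*} {I : A → A → Prop}

lemma trOf_commute {a b : A} (h : I a b) : Commute (trOf I a) (trOf I b) := by
  simp only [trOf, Commute, SemiconjBy, ← map_mul]
  exact (traceCon I).eq.2 (ConGen.Rel.of _ _ ⟨a, b, h, rfl, rfl⟩)

lemma trCount_mul (a : A) (x y : TraceMonoid A I) :
    trCount a (x * y) = trCount a x + trCount a y := by
  simp [trCount]

lemma trCount_trOf (a b : A) : trCount a (trOf I b) = if b = a then 1 else 0 := by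
  simp [trCount, trOf]

lemma trCount_listProd (a : A) (l : List A) : trCount a (listProd I l) = l.count a := by
  induction l with
  | nil => simp [listProd, trCount]
  | cons b l ih =>
    simp only [listProd, List.map_cons, List.prod_cons] at ih ⊢
    rw [trCount_mul, ih, trCount_trOf, List.count_cons]
    split_ifs <;> simp_all [add_comm]

lemma mem_iff_of_listProd_eq {l l' : List A} (h : listProd I l = listProd I l') (a : A) :
    a ∈ l ↔ a ∈ l' := by
  rw [← List.count_pos_iff, ← List.count_pos_iff, ← trCount_listProd (I := I),
    ← trCount_listProd (I := I), h]

lemma listProd_toList (w : FreeMonoid A) : listProd I w.toList = (traceCon I).mk' w := by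
  rw [listProd, ← FreeMonoid.lift_apply]
  exact DFunLike.congr_fun (FreeMonoid.lift_restrict (traceCon I).mk') w

lemma listProd_append (l l' : List A) : listProd I (l ++ l') = listProd I l * listProd I l' := by
  simp only [listProd, List.map_append, List.prod_append]

lemma exists_listProd_eq (x : TraceMonoid A I) : ∃ l, listProd I l = x := by
  induction x using Con.induction_on with
  | _ w => exact ⟨w.toList, listProd_toList w⟩

lemma fprod_eq_noncommProd {c : Finset A} (hc : (c : Set A).Pairwise I) :
    fprod I c = c.noncommProd (trOf I) (hc.mono' fun _ _ => trOf_commute) := by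
  rw [fprod, listProd, ← Finset.noncommProd_toFinset _ _ _ c.nodup_toList]
  · simp_rw [Finset.toList_toFinset]
  · simpa using hc.mono' fun _ _ => trOf_commute

lemma fprod_insert {a : A} {c : Finset A} (ha : a ∉ c)
    (hc : (↑(insert a c) : Set A).Pairwise I) :
    fprod I (insert a c) = fprod I c * trOf I a := by
  rw [fprod_eq_noncommProd hc, Finset.noncommProd_insert_of_notMem' _ _ _ _ ha,
    fprod_eq_noncommProd (hc.mono (by simp))]

lemma isCliqueList_toList {c : Finset A} (hc : (c : Set A).Pairwise I) :
    IsCliqueList I c.toList :=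
  c.nodup_toList.imp_of_mem fun ha hb hab =>
    ⟨hab, hc (Finset.mem_toList.1 ha) (Finset.mem_toList.1 hb) hab⟩

lemma pairwise_toFinset_of_isCliqueList [Std.Symm I] {l : List A}
    (hl : IsCliqueList I l) : (l.toFinset : Set A).Pairwise I := by
  intro a ha b hb hab
  simp only [Finset.mem_coe, List.mem_toFinset] at ha hb
  obtain ⟨i, hi, rfl⟩ := List.getElem_of_mem ha
  obtain ⟨j, hj, rfl⟩ := List.getElem_of_mem hb
  rcases lt_trichotomy i j with hij | rfl | hij
  · exact (List.pairwise_iff_getElem.1 hl i j hi hj hij).2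
  · exact absurd rfl hab
  · exact symm (List.pairwise_iff_getElem.1 hl j i hj hi hij).2

lemma fprod_toFinset [Std.Symm I] {l : List A} (hl : IsCliqueList I l) :
    fprod I l.toFinset = listProd I l := by
  rw [fprod_eq_noncommProd (pairwise_toFinset_of_isCliqueList hl),
    Finset.noncommProd_toFinset _ _ _ (hl.imp And.left), listProd]

lemma fprod_ne_one {c : Finset A} (hc : c.Nonempty) : fprod I c ≠ 1 := fun h => by
  obtain ⟨a, ha⟩ := hc
  simpa using (mem_iff_of_listProd_eq (l' := []) h a).1 (Finset.mem_toList.2 ha)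

lemma pairwise_insert_of_indep [Std.Symm I] {a : A} {c : Finset A}
    (hc : (c : Set A).Pairwise I) (hac : ∀ b ∈ c, a ≠ b ∧ I a b) :
    (↑(insert a c) : Set A).Pairwise I := by
  rw [Finset.coe_insert, Set.pairwise_insert]
  exact ⟨hc, fun b hb _ => ⟨(hac b hb).2, symm (hac b hb).2⟩⟩

lemma isClique_and_ne_one_iff [Std.Symm I] {c : TraceMonoid A I} :
    IsClique I c ∧ c ≠ 1 ↔
      ∃ s : Finset A, (s.Nonempty ∧ (s : Set A).Pairwise I) ∧ fprod I s = c := by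
  constructor
  · rintro ⟨⟨l, hl, rfl⟩, hne⟩
    refine ⟨l.toFinset, ⟨?_, pairwise_toFinset_of_isCliqueList hl⟩, fprod_toFinset hl⟩
    exact List.toFinset_nonempty_iff l |>.2 fun h => hne (by simp [h, listProd])
  · rintro ⟨s, ⟨hne, hs⟩, rfl⟩
    exact ⟨⟨s.toList, isCliqueList_toList hs, rfl⟩, fprod_ne_one hne⟩

lemma normalPairM_fprod_iff {s t : Finset A} (hs : (s : Set A).Pairwise I)
    (ht : (t : Set A).Pairwise I) : NormalPairM I (fprod I s) (fprod I t) ↔ NormalF I s t := by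
  constructor
  · rintro ⟨l₁, l₂, -, -, hs₁, ht₂, h⟩ b hb
    obtain ⟨a, ha, hab⟩ := h b ((mem_iff_of_listProd_eq ht₂ b).1 (Finset.mem_toList.2 hb))
    exact ⟨a, Finset.mem_toList.1 ((mem_iff_of_listProd_eq hs₁ a).2 ha), hab⟩
  · intro h
    refine ⟨s.toList, t.toList, isCliqueList_toList hs, isCliqueList_toList ht, rfl, rfl,
      fun b hb => ?_⟩
    obtain ⟨a, ha, hab⟩ := h b (Finset.mem_toList.1 hb)
    exact ⟨a, Finset.mem_toList.2 ha, hab⟩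

def IsCartierFoata (I : A → A → Prop) (F : List (Finset A)) : Prop :=
  (∀ c ∈ F, c.Nonempty ∧ (c : Set A).Pairwise I) ∧ F.IsChain (NormalF I)

lemma isCartierFoata_cons {c : Finset A} {F : List (Finset A)} :
    IsCartierFoata I (c :: F) ↔
      (c.Nonempty ∧ (c : Set A).Pairwise I) ∧ (∀ d ∈ F.head?, NormalF I c d) ∧
        IsCartierFoata I F := by
  simp only [IsCartierFoata, List.forall_mem_cons, List.isChain_cons]
  tauto

lemma isCartierFoata_append_singleton {G : List (Finset A)} {c : Finset A} :
    IsCartierFoata I (G ++ [c]) ↔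
      IsCartierFoata I G ∧ (c.Nonempty ∧ (c : Set A).Pairwise I) ∧
        ∀ d ∈ G.getLast?, NormalF I d c := by
  simp only [IsCartierFoata, List.forall_mem_append, List.forall_mem_singleton,
    List.isChain_append, List.isChain_singleton, List.head?_cons, Option.mem_some_iff,
    forall_eq']
  tauto

lemma cliques_normal_iff_exists_isCartierFoata [Std.Symm I] {L : List (TraceMonoid A I)} :
    ((∀ c ∈ L, IsClique I c ∧ c ≠ 1) ∧ L.IsChain (NormalPairM I)) ↔
      ∃ F, IsCartierFoata I F ∧ F.map (fprod I) = L := by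
  have chain_iff (F : List (Finset A)) (hF : ∀ c ∈ F, c.Nonempty ∧ (c : Set A).Pairwise I) :
      (F.map (fprod I)).IsChain (NormalPairM I) ↔ F.IsChain (NormalF I) := by
    rw [List.isChain_map]
    exact List.IsChain.iff_of_mem_imp fun s t hs ht =>
      normalPairM_fprod_iff (hF s hs).2 (hF t ht).2
  constructor
  · rintro ⟨hL, hch⟩
    obtain ⟨F, hF, rfl⟩ := List.exists_map_eq_of_forall_mem fun c hc =>
      isClique_and_ne_one_iff.1 (hL c hc)
    exact ⟨F, ⟨hF, (chain_iff F hF).1 hch⟩, rfl⟩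
  · rintro ⟨F, ⟨hF, hch⟩, rfl⟩
    refine ⟨fun c hc => ?_, (chain_iff F hF).2 hch⟩
    obtain ⟨s, hs, rfl⟩ := List.mem_map.1 hc
    exact isClique_and_ne_one_iff.2 ⟨s, hF s hs, rfl⟩

/-- Asking for `a ≠ b` makes `¬ IndepOf I a [c]` mean exactly that `a` depends, in the sense of
`NormalF`, on some letter of `c`, whether or not `I` is irreflexive. -/
def IndepOf (I : A → A → Prop) (a : A) (F : List (Finset A)) : Prop :=
  ∀ c ∈ F, ∀ b ∈ c, a ≠ b ∧ I a b

@[simp]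
lemma indepOf_nil (a : A) : IndepOf I a [] := by simp [IndepOf]

@[simp]
lemma indepOf_cons {a : A} {c : Finset A} {F : List (Finset A)} :
    IndepOf I a (c :: F) ↔ (∀ b ∈ c, a ≠ b ∧ I a b) ∧ IndepOf I a F := by
  simp [IndepOf]

lemma IndepOf.mono {a : A} {F G : List (Finset A)} (h : IndepOf I a G) (hFG : F ⊆ G) :
    IndepOf I a F :=
  fun c hc => h c (hFG hc)

noncomputable def cfInsert (I : A → A → Prop) (a : A) : List (Finset A) → List (Finset A)
  | [] => [{a}]
  | c :: F => if IndepOf I a (c :: F) then insert a c :: F else c :: cfInsert I a F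

@[simp]
lemma cfInsert_nil (a : A) : cfInsert I a [] = [{a}] := rfl

lemma cfInsert_cons_of_indepOf {a : A} {c : Finset A} {F : List (Finset A)}
    (h : IndepOf I a (c :: F)) : cfInsert I a (c :: F) = insert a c :: F := if_pos h

lemma cfInsert_cons_of_not_indepOf {a : A} {c : Finset A} {F : List (Finset A)}
    (h : ¬ IndepOf I a (c :: F)) : cfInsert I a (c :: F) = c :: cfInsert I a F := if_neg h

@[simp]
lemma indepOf_cfInsert {x a : A} {F : List (Finset A)} :
    IndepOf I x (cfInsert I a F) ↔ (x ≠ a ∧ I x a) ∧ IndepOf I x F := by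
  induction F with
  | nil => simp
  | cons c F ih =>
    by_cases h : IndepOf I a (c :: F)
    · simp [cfInsert_cons_of_indepOf h, and_assoc]
    · simp only [cfInsert_cons_of_not_indepOf h, indepOf_cons, ih]
      tauto

lemma cfInsert_comm [Std.Symm I] {a b : A} (hab : I a b) (F : List (Finset A)) :
    cfInsert I a (cfInsert I b F) = cfInsert I b (cfInsert I a F) := by
  obtain rfl | hne := eq_or_ne a b
  · rfl
  have hab' : a ≠ b ∧ I a b := ⟨hne, hab⟩
  have hba' : b ≠ a ∧ I b a := ⟨hne.symm, symm hab⟩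
  induction F with
  | nil =>
    simp [cfInsert, IndepOf, hab', hba', Finset.pair_comm]
  | cons c F ih =>
    by_cases ha : IndepOf I a (c :: F) <;> by_cases hb : IndepOf I b (c :: F) <;>
      simp only [cfInsert, ha, hb, if_true, if_false] <;>
      split_ifs <;> simp_all [Finset.insert_comm]

lemma NormalF.mono_left {c c' d : Finset A} (h : NormalF I c d) (hc : c ⊆ c') :
    NormalF I c' d := fun b hb =>
  let ⟨a, ha, hab⟩ := h b hb; ⟨a, hc ha, hab⟩

lemma normalF_insert_right {a : A} {c d : Finset A} :
    NormalF I c (insert a d) ↔ (∃ z ∈ c, ¬ I z a ∨ z = a) ∧ NormalF I c d :=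
  Finset.forall_mem_insert _ _ _

lemma exists_dep_of_not_indep [Std.Symm I] {a : A} {c : Finset A}
    (h : ¬ ∀ b ∈ c, a ≠ b ∧ I a b) : ∃ z ∈ c, ¬ I z a ∨ z = a := by
  push Not at h
  obtain ⟨z, hz, hza⟩ := h
  by_cases hza' : z = a
  · exact ⟨z, hz, .inr hza'⟩
  · exact ⟨z, hz, .inl fun h => hza (Ne.symm hza') (symm h)⟩

lemma normalF_head_cfInsert [Std.Symm I] {a : A} {c : Finset A} {F : List (Finset A)}
    (hhead : ∀ d ∈ F.head?, NormalF I c d) (hdep : ¬ IndepOf I a (c :: F)) :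
    ∀ d ∈ (cfInsert I a F).head?, NormalF I c d := by
  cases F with
  | nil => simpa [NormalF] using exists_dep_of_not_indep (by simpa using hdep)
  | cons d F =>
    by_cases h : IndepOf I a (d :: F)
    · rw [cfInsert_cons_of_indepOf h, List.head?_cons]
      rintro _ ⟨⟩
      exact normalF_insert_right.2
        ⟨exists_dep_of_not_indep fun hc => hdep (indepOf_cons.2 ⟨hc, h⟩), hhead d rfl⟩
    · rwa [cfInsert_cons_of_not_indepOf h]

lemma isCartierFoata_cfInsert [Std.Symm I] (a : A) {F : List (Finset A)}
    (hF : IsCartierFoata I F) :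
    IsCartierFoata I (cfInsert I a F) := by
  induction F with
  | nil => simp [IsCartierFoata]
  | cons c F ih =>
    obtain ⟨⟨hne, hc⟩, hhead, hF'⟩ := isCartierFoata_cons.1 hF
    by_cases h : IndepOf I a (c :: F)
    · obtain ⟨hac, -⟩ := indepOf_cons.1 h
      rw [cfInsert_cons_of_indepOf h]
      exact isCartierFoata_cons.2
        ⟨⟨Finset.insert_nonempty a c, pairwise_insert_of_indep hc hac⟩,
          fun d hd => (hhead d hd).mono_left (Finset.subset_insert a c), hF'⟩
    · rw [cfInsert_cons_of_not_indepOf h]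
      exact isCartierFoata_cons.2 ⟨⟨hne, hc⟩, normalF_head_cfInsert hhead h, ih hF'⟩

lemma IndepOf.commute {a : A} {F : List (Finset A)} (h : IndepOf I a F) :
    Commute (trOf I a) (F.map (fprod I)).prod :=
  Commute.list_prod_right _ _ fun x hx => by
    obtain ⟨c, hc, rfl⟩ := List.mem_map.1 hx
    refine Commute.list_prod_right _ _ fun y hy => ?_
    obtain ⟨b, hb, rfl⟩ := List.mem_map.1 hy
    exact trOf_commute (h c hc b (Finset.mem_toList.1 hb)).2

lemma prod_map_fprod_cfInsert [Std.Symm I] (a : A) {F : List (Finset A)}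
    (hF : IsCartierFoata I F) :
    ((cfInsert I a F).map (fprod I)).prod = (F.map (fprod I)).prod * trOf I a := by
  induction F with
  | nil => simp [fprod, listProd]
  | cons c F ih =>
    have hc := ((isCartierFoata_cons.1 hF).1).2
    by_cases h : IndepOf I a (c :: F)
    · obtain ⟨hac, hF'⟩ := indepOf_cons.1 h
      rw [cfInsert_cons_of_indepOf h, List.map_cons, List.prod_cons,
        fprod_insert (fun ha => (hac a ha).1 rfl) (pairwise_insert_of_indep hc hac),
        List.map_cons, List.prod_cons, mul_assoc, hF'.commute.eq, mul_assoc]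
    · rw [cfInsert_cons_of_not_indepOf h, List.map_cons, List.prod_cons,
        ih (isCartierFoata_cons.1 hF).2.2, List.map_cons, List.prod_cons, mul_assoc]

noncomputable def cfFold (I : A → A → Prop) (F : List (Finset A)) (l : List A) :
    List (Finset A) :=
  l.foldl (fun F a => cfInsert I a F) F

@[simp]
lemma cfFold_nil (F : List (Finset A)) : cfFold I F [] = F := rfl

@[simp]
lemma cfFold_cons (F : List (Finset A)) (a : A) (l : List A) :
    cfFold I F (a :: l) = cfFold I (cfInsert I a F) l := rfl

lemma cfFold_append (F : List (Finset A)) (l l' : List A) :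
    cfFold I F (l ++ l') = cfFold I (cfFold I F l) l' :=
  List.foldl_append

lemma cfFold_eq_of_traceCon [Std.Symm I] {w w' : FreeMonoid A} (h : traceCon I w w')
    (F : List (Finset A)) : cfFold I F w.toList = cfFold I F w'.toList := by
  induction h generalizing F with
  | of _ _ hswap =>
    obtain ⟨a, b, hab, rfl, rfl⟩ := hswap
    exact (cfInsert_comm hab F).symm
  | refl => rfl
  | symm _ ih => exact (ih F).symm
  | trans _ _ ih₁ ih₂ => exact (ih₁ F).trans (ih₂ F)
  | mul _ _ ih₁ ih₂ =>
    rw [FreeMonoid.toList_mul, FreeMonoid.toList_mul, cfFold_append, cfFold_append, ih₁, ih₂]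

noncomputable def cfNormalForm (I : A → A → Prop) [Std.Symm I] (x : TraceMonoid A I) :
    List (Finset A) :=
  Con.liftOn x (fun w => cfFold I [] w.toList) fun _ _ h => cfFold_eq_of_traceCon h []

lemma cfNormalForm_listProd [Std.Symm I] (l : List A) :
    cfNormalForm I (listProd I l) = cfFold I [] l := by
  have h := listProd_toList (I := I) (FreeMonoid.ofList l)
  rw [FreeMonoid.toList_ofList] at h
  rw [h]
  rfl

lemma cfNormalForm_mul_listProd [Std.Symm I] (x : TraceMonoid A I) (l : List A) :
    cfNormalForm I (x * listProd I l) = cfFold I (cfNormalForm I x) l := by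
  obtain ⟨l', rfl⟩ := exists_listProd_eq x
  rw [← listProd_append, cfNormalForm_listProd, cfNormalForm_listProd, cfFold_append]

lemma isCartierFoata_cfFold [Std.Symm I] {F : List (Finset A)} (hF : IsCartierFoata I F)
    (l : List A) : IsCartierFoata I (cfFold I F l) := by
  induction l generalizing F with
  | nil => exact hF
  | cons a l ih => exact ih (isCartierFoata_cfInsert a hF)

lemma prod_map_fprod_cfFold [Std.Symm I] {F : List (Finset A)} (hF : IsCartierFoata I F)
    (l : List A) :
    ((cfFold I F l).map (fprod I)).prod = (F.map (fprod I)).prod * listProd I l := by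
  induction l generalizing F with
  | nil => simp [listProd]
  | cons a l ih =>
    rw [cfFold_cons, ih (isCartierFoata_cfInsert a hF), prod_map_fprod_cfInsert a hF, mul_assoc]
    rfl

lemma isCartierFoata_cfNormalForm [Std.Symm I] (x : TraceMonoid A I) :
    IsCartierFoata I (cfNormalForm I x) := by
  obtain ⟨l, rfl⟩ := exists_listProd_eq x
  rw [cfNormalForm_listProd]
  exact isCartierFoata_cfFold ⟨by simp, .nil⟩ l

lemma prod_map_fprod_cfNormalForm [Std.Symm I] (x : TraceMonoid A I) :
    ((cfNormalForm I x).map (fprod I)).prod = x := by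
  obtain ⟨l, rfl⟩ := exists_listProd_eq x
  rw [cfNormalForm_listProd, prod_map_fprod_cfFold ⟨by simp, .nil⟩, List.map_nil, List.prod_nil,
    one_mul]

lemma cfInsert_append_cons {b : A} {d : Finset A} (hb : ¬ IndepOf I b [d])
    (M E : List (Finset A)) : cfInsert I b (M ++ d :: E) = M ++ d :: cfInsert I b E := by
  induction M with
  | nil => exact cfInsert_cons_of_not_indepOf fun h => hb (h.mono (by simp))
  | cons m M ih =>
    rw [List.cons_append, cfInsert_cons_of_not_indepOf fun h => hb (h.mono (by simp)), ih,
      List.cons_append]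

lemma cfFold_append_cons {d : Finset A} {l : List A} (hl : ∀ b ∈ l, ¬ IndepOf I b [d])
    (M E : List (Finset A)) : cfFold I (M ++ d :: E) l = M ++ d :: cfFold I E l := by
  induction l generalizing E with
  | nil => rfl
  | cons a l ih =>
    rw [cfFold_cons, cfFold_cons, cfInsert_append_cons (hl a List.mem_cons_self),
      ih fun b hb => hl b (List.mem_cons_of_mem a hb)]

lemma cfFold_singleton [Std.Symm I] {s : Finset A} {l : List A} (hl : IsCliqueList I l)
    (hs : ∀ a ∈ l, ∀ b ∈ s, a ≠ b ∧ I a b) : cfFold I [s] l = [s ∪ l.toFinset] := by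
  induction l generalizing s with
  | nil => simp
  | cons a l ih =>
    obtain ⟨hal, hl⟩ := List.pairwise_cons.1 hl
    have hins : cfInsert I a [s] = [insert a s] :=
      cfInsert_cons_of_indepOf (by simpa using hs a List.mem_cons_self)
    rw [cfFold_cons, hins, ih hl fun a' ha' b hb => ?_]
    · simp [Finset.insert_union, Finset.union_insert]
    · obtain rfl | hb := Finset.mem_insert.1 hb
      · exact ⟨(hal a' ha').1.symm, symm (hal a' ha').2⟩
      · exact hs a' (List.mem_cons_of_mem a ha') b hb

lemma cfFold_nil_toList [Std.Symm I] {c : Finset A} (hne : c.Nonempty)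
    (hc : (c : Set A).Pairwise I) : cfFold I [] c.toList = [c] := by
  obtain ⟨a, l, hal⟩ := List.exists_cons_of_ne_nil (Finset.toList_eq_nil.not.2 hne.ne_empty)
  have hcl := isCliqueList_toList hc
  rw [hal, IsCliqueList, List.pairwise_cons] at hcl
  conv_rhs => rw [← c.toList_toFinset, hal]
  rw [hal, cfFold_cons, cfInsert_nil, cfFold_singleton hcl.2 fun a' ha' b hb => ?_]
  · rw [List.toFinset_cons, Finset.insert_eq]
  · rw [Finset.mem_singleton.1 hb]
    exact ⟨(hcl.1 a' ha').1.symm, symm (hcl.1 a' ha').2⟩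

lemma not_indepOf_of_normalF [Std.Symm I] {d c : Finset A} (h : NormalF I d c) {b : A}
    (hb : b ∈ c) : ¬ IndepOf I b [d] := fun hind => by
  obtain ⟨z, hz, hzb⟩ := h b hb
  obtain ⟨hbz, hbz'⟩ := indepOf_cons.1 hind |>.1 z hz
  exact hzb.elim (· (symm hbz')) (hbz ∘ Eq.symm)

lemma cfNormalForm_prod_map_fprod [Std.Symm I] {F : List (Finset A)} (hF : IsCartierFoata I F) :
    cfNormalForm I (F.map (fprod I)).prod = F := by
  induction F using List.reverseRecOn with
  | nil => exact cfNormalForm_listProd []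
  | append_singleton G c ih =>
    obtain ⟨hG, ⟨hne, hc⟩, hdc⟩ := isCartierFoata_append_singleton.1 hF
    rw [List.map_append, List.prod_append, List.map_singleton, List.prod_singleton, fprod,
      cfNormalForm_mul_listProd, ih hG]
    rcases G.eq_nil_or_concat with rfl | ⟨M, d, rfl⟩
    · exact cfFold_nil_toList hne hc
    · have hdc : NormalF I d c := hdc d (by simp)
      rw [List.concat_eq_append, cfFold_append_cons
        (fun b hb => not_indepOf_of_normalF hdc (Finset.mem_toList.1 hb)),
        cfFold_nil_toList hne hc, List.append_assoc, List.singleton_append]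

end CartierFoata

theorem stmt3_general {A : Type*} {I : A → A → Prop}
    (hsym : Symmetric I)
    (x : TraceMonoid A I) (hx : x ≠ 1) :
    ∃! L : List (TraceMonoid A I),
      L ≠ [] ∧ (∀ c ∈ L, IsClique I c ∧ c ≠ 1) ∧
      L.Chain' (NormalPairM I) ∧ L.prod = x := by
  have : Std.Symm I := ⟨hsym⟩
  set F := cfNormalForm I x
  have hF : IsCartierFoata I F := isCartierFoata_cfNormalForm x
  have hFx : (F.map (fprod I)).prod = x := prod_map_fprod_cfNormalForm x
  obtain ⟨hcl, hch⟩ := cliques_normal_iff_exists_isCartierFoata.2 ⟨F, hF, rfl⟩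
  refine ⟨F.map (fprod I), ⟨fun h => hx ?_, hcl, hch, hFx⟩, ?_⟩
  · rw [← hFx, h, List.prod_nil]
  · rintro L ⟨-, hLcl, hLch, hLx⟩
    obtain ⟨G, hG, rfl⟩ := cliques_normal_iff_exists_isCartierFoata.1 ⟨hLcl, hLch⟩
    rw [← cfNormalForm_prod_map_fprod hG, hLx]

/-- every nonempty trace has a unique Cartier–Foata normal form: a
unique nonempty sequence of nonempty cliques, consecutively normal, with product `x`. -/
theorem stmt3 {A : Type*} [Fintype A] {I : A → A → Prop}
    (hsym : Symmetric I) (hirr : Irreflexive I)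
    (x : TraceMonoid A I) (hx : x ≠ 1) :
    ∃! L : List (TraceMonoid A I),
      L ≠ [] ∧ (∀ c ∈ L, IsClique I c ∧ c ≠ 1) ∧
      L.Chain' (NormalPairM I) ∧ L.prod = x :=
  stmt3_general hsym x hx
end
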